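/- arXiv:1807.00607 — 6 statements merged into one kernel-verified Lean document; each statement's English description precedes it below -/
import Mathlib

section
/- If (a_i)_{i∈ℕ} is a sequence of real numbers such that ∑ |a_i| converges, then the infinite product ∏_{i} (1 + a_i) equals the sum over all finite subsets J of ℕ of ∏_{i∈J} a_i, and both converge absolutely. -/
open Filter Topology

theorem stmt_0 (a : ℕ → ℝ) (h : Summable fun i => |a i|) :
    Summable (fun J : Finset ℕ => |∏ i ∈ J, a i|) ∧
    Tendsto (fun n => ∏ i ∈ Finset.range n, (1 + a i)) atTop
      (𝓝 (∑' J : Finset ℕ, ∏ i ∈ J, a i)) := by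
  have hsummable : Summable fun J : Finset ℕ => |∏ i ∈ J, a i| := by
    simpa only [Finset.abs_prod] using
      summable_finsetProd_of_summable_nonneg (fun i => abs_nonneg (a i)) h
  have hprod : HasProd (fun i => 1 + a i) (∑' J : Finset ℕ, ∏ i ∈ J, a i) :=
    hasProd_one_add_of_hasSum_prod hsummable.of_abs.hasSum
  exact ⟨hsummable, hprod.tendsto_prod_nat⟩
end

section
/- Let (Ω, 𝔄, P) be a probability space and (A_i)_{i∈ℕ} a sequence of pairwise independent events with ∑_i P(A_i) = ∞. Then P(limsup A_i) = 1, i.e., the probability that infinitely many of the A_i occur is 1. -/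
/-!
Chung–Erdős route. For `f = ∑_{i<N} 1_{A i}`, Cauchy–Schwarz against the indicator of
`U = ⋃_{i<N} A i` gives `(∫ f)² ≤ ∫ f² · μ U`, i.e. `m² ≤ (∑_{i,j<N} μ(A i ∩ A j)) · μ U` with
`m = ∑_{i<N} μ (A i)`. Pairwise independence bounds the double sum by `m + m²`, hence
`1 - μ U ≤ (1 + m)⁻¹`. Letting `N → ∞` gives `μ (⋃ i, A i) = 1`; applied to every tail this
gives the limsup.
-/

open MeasureTheory Filter
open scoped ENNReal Topology

theorem ENNReal.one_sub_le_inv_one_add_of_sq_le {m p : ℝ≥0∞} (hm : m ≠ ∞)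
    (h : m ^ 2 ≤ (m + m ^ 2) * p) : 1 - p ≤ (1 + m)⁻¹ := by
  have hmp : m ≤ (1 + m) * p := by
    rcases eq_or_ne m 0 with rfl | hm0
    · exact zero_le
    refine (ENNReal.mul_le_mul_iff_right hm0 hm).1 ?_
    calc m * m = m ^ 2 := (sq m).symm
      _ ≤ (m + m ^ 2) * p := h
      _ = m * ((1 + m) * p) := by ring
  rw [ENNReal.le_inv_iff_mul_le, mul_comm, ENNReal.mul_sub fun _ _ => by finiteness, mul_one]
  calc 1 + m - (1 + m) * p ≤ 1 + m - m := tsub_le_tsub_left hmp _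
    _ = 1 := ENNReal.add_sub_cancel_right hm

section

variable {Ω : Type*} [MeasurableSpace Ω] {μ : Measure Ω}

theorem lintegral_sq_le_lintegral_sq_mul_measure {f : Ω → ℝ≥0∞} (hf : AEMeasurable f μ)
    {U : Set Ω} (hU : MeasurableSet U) (hfU : ∀ ω ∉ U, f ω = 0) :
    (∫⁻ ω, f ω ∂μ) ^ 2 ≤ (∫⁻ ω, f ω ^ 2 ∂μ) * μ U := by
  have hf_eq : f * U.indicator 1 = f := by
    funext ω
    by_cases hω : ω ∈ U <;> simp [hω, hfU]
  have hU_eq : ∫⁻ ω, U.indicator 1 ω ^ 2 ∂μ = μ U := by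
    rw [← lintegral_indicator_one hU]
    congr with ω
    by_cases hω : ω ∈ U <;> simp [hω]
  have hholder : ∫⁻ ω, f ω ∂μ ≤ (∫⁻ ω, f ω ^ 2 ∂μ) ^ (1 / 2 : ℝ) * μ U ^ (1 / 2 : ℝ) := by
    simpa only [hf_eq, hU_eq, ENNReal.rpow_two] using
      ENNReal.lintegral_mul_le_Lp_mul_Lq μ Real.HolderConjugate.two_two hf
        (g := U.indicator 1) (measurable_one.indicator hU).aemeasurable
  calc (∫⁻ ω, f ω ∂μ) ^ 2
      ≤ ((∫⁻ ω, f ω ^ 2 ∂μ) ^ (1 / 2 : ℝ) * μ U ^ (1 / 2 : ℝ)) ^ 2 := by gcongr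
    _ = (∫⁻ ω, f ω ^ 2 ∂μ) * μ U := by
        simp only [mul_pow, ← ENNReal.rpow_natCast, ← ENNReal.rpow_mul]
        norm_num

theorem sq_sum_measure_le_sum_measure_inter_mul_measure_biUnion {ι : Type*} {A : ι → Set Ω}
    (hA : ∀ i, MeasurableSet (A i)) (s : Finset ι) :
    (∑ i ∈ s, μ (A i)) ^ 2 ≤ (∑ i ∈ s, ∑ j ∈ s, μ (A i ∩ A j)) * μ (⋃ i ∈ s, A i) := by
  set f : Ω → ℝ≥0∞ := fun ω => ∑ i ∈ s, (A i).indicator 1 ω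
  have hf_int : ∫⁻ ω, f ω ∂μ = ∑ i ∈ s, μ (A i) := by
    rw [lintegral_finsetSum _ fun i _ => measurable_one.indicator (hA i)]
    simp_rw [lintegral_indicator_one (hA _)]
  have hf_sq : ∫⁻ ω, f ω ^ 2 ∂μ = ∑ i ∈ s, ∑ j ∈ s, μ (A i ∩ A j) := by
    have hmeas : ∀ i j, Measurable ((A i ∩ A j).indicator (1 : Ω → ℝ≥0∞)) := fun i j =>
      measurable_one.indicator ((hA i).inter (hA j))
    simp_rw [f, sq, Finset.sum_mul_sum, ← Set.inter_indicator_mul, Pi.one_apply, mul_one,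
      ← Pi.one_def]
    rw [lintegral_finsetSum _ fun i _ => Finset.measurable_sum _ fun j _ => hmeas i j]
    refine Finset.sum_congr rfl fun i _ => ?_
    rw [lintegral_finsetSum _ fun j _ => hmeas i j]
    simp_rw [lintegral_indicator_one ((hA _).inter (hA _))]
  have hf_supp : ∀ ω ∉ ⋃ i ∈ s, A i, f ω = 0 := fun ω hω =>
    Finset.sum_eq_zero fun i hi =>
      Set.indicator_of_notMem (fun h => hω (Set.mem_biUnion hi h)) _
  rw [← hf_int, ← hf_sq]
  exact lintegral_sq_le_lintegral_sq_mul_measure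
    (Finset.measurable_sum _ fun i _ => measurable_one.indicator (hA i)).aemeasurable
    (s.measurableSet_biUnion fun i _ => hA i) hf_supp

theorem sum_sum_measure_inter_le_of_pairwise {ι : Type*} {A : ι → Set Ω}
    (hind : Pairwise fun i j => μ (A i ∩ A j) = μ (A i) * μ (A j)) (s : Finset ι) :
    ∑ i ∈ s, ∑ j ∈ s, μ (A i ∩ A j) ≤ ∑ i ∈ s, μ (A i) + (∑ i ∈ s, μ (A i)) ^ 2 := by
  classical
  calc ∑ i ∈ s, ∑ j ∈ s, μ (A i ∩ A j)
      = ∑ i ∈ s, (μ (A i) + ∑ j ∈ s.erase i, μ (A i) * μ (A j)) := by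
        refine Finset.sum_congr rfl fun i hi => ?_
        rw [← Finset.add_sum_erase _ _ hi, Set.inter_self]
        congr 1
        exact Finset.sum_congr rfl fun j hj => hind (Finset.ne_of_mem_erase hj).symm
    _ ≤ ∑ i ∈ s, (μ (A i) + μ (A i) * ∑ j ∈ s, μ (A j)) := by
        gcongr with i
        rw [← Finset.mul_sum]
        gcongr
        exact Finset.erase_subset _ _
    _ = ∑ i ∈ s, μ (A i) + (∑ i ∈ s, μ (A i)) ^ 2 := by
        rw [Finset.sum_add_distrib, ← Finset.sum_mul, sq]

theorem measure_iUnion_eq_one_of_pairwise [IsProbabilityMeasure μ] {A : ℕ → Set Ω}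
    (hA : ∀ i, MeasurableSet (A i))
    (hind : Pairwise fun i j => μ (A i ∩ A j) = μ (A i) * μ (A j))
    (hsum : ∑' i, μ (A i) = ∞) :
    μ (⋃ i, A i) = 1 := by
  set m : ℕ → ℝ≥0∞ := fun N => ∑ i ∈ Finset.range N, μ (A i)
  have hbound : ∀ N, 1 - μ (⋃ i, A i) ≤ (1 + m N)⁻¹ := fun N => by
    refine ENNReal.one_sub_le_inv_one_add_of_sq_le
      (ENNReal.sum_ne_top.2 fun i _ => measure_ne_top μ _) ?_
    calc m N ^ 2
        ≤ (∑ i ∈ Finset.range N, ∑ j ∈ Finset.range N, μ (A i ∩ A j))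
            * μ (⋃ i ∈ Finset.range N, A i) :=
          sq_sum_measure_le_sum_measure_inter_mul_measure_biUnion hA _
      _ ≤ (m N + m N ^ 2) * μ (⋃ i, A i) :=
          mul_le_mul' (sum_sum_measure_inter_le_of_pairwise hind _)
            (measure_mono (Set.iUnion₂_subset_iUnion _ _))
  have hm : Tendsto (fun N => (1 + m N)⁻¹) atTop (𝓝 0) := by
    rw [← ENNReal.inv_top, tendsto_inv_iff]
    simpa [hsum] using tendsto_const_nhds.add (ENNReal.tendsto_nat_tsum fun i => μ (A i))
  refine le_antisymm prob_le_one ?_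
  simpa [tsub_eq_zero_iff_le] using ge_of_tendsto' hm hbound

end

theorem stmt_5 {Ω : Type*} [MeasurableSpace Ω] (μ : Measure Ω)
    [IsProbabilityMeasure μ] (A : ℕ → Set Ω) (hA : ∀ i, MeasurableSet (A i))
    (hind : Pairwise fun i j => μ (A i ∩ A j) = μ (A i) * μ (A j))
    (hsum : ∑' i, μ (A i) = ⊤) :
    μ (⋂ n, ⋃ i, ⋃ _ : n ≤ i, A i) = 1 := by
  have htail : ∀ n, μ (⋃ i, ⋃ _ : n ≤ i, A i) = 1 := fun n => by
    have hsum_tail : ∑' i, μ (A (i + n)) = ∞ := by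
      rw [← ENNReal.summable.sum_add_tsum_nat_add', ENNReal.add_eq_top] at hsum
      exact hsum.resolve_left (ENNReal.sum_ne_top.2 fun i _ => measure_ne_top μ _)
    change μ (⋃ i ≥ n, A i) = 1
    rw [Set.iUnion_ge_eq_iUnion_nat_add]
    exact measure_iUnion_eq_one_of_pairwise (fun i => hA (i + n))
      (hind.comp_of_injective (add_left_injective n)) hsum_tail
  have hT : ∀ n, MeasurableSet (⋃ i, ⋃ _ : n ≤ i, A i) := fun n =>
    .iUnion fun i => .iUnion fun _ => hA i
  rw [← mem_ae_iff_prob_eq_one (.iInter hT), countable_iInter_mem]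
  exact fun n => (mem_ae_iff_prob_eq_one (hT n)).2 (htail n)
end

section
/- Let F be a countable set and (p_f)_{f∈F} a family of reals in [0,1] with ∑_{f∈F} p_f < ∞. Define, for each finite subset D ⊆ F, P({D}) = (∏_{f∈D} p_f) · (∏_{f∈F∖D} (1 − p_f)). Then the sum of P({D}) over all finite subsets D of F equals 1. -/
/-!
For a finite `s` and `D ⊆ s`, the tail product splits as
`∏' f ∉ D, (1 - p f) = ∏ f ∈ s \ D, (1 - p f) * ∏' f ∉ s, (1 - p f)`, so the binomial
expansion of `∏ f ∈ s, (p f + (1 - p f)) = 1` gives `∑ D ⊆ s, P D = ∏' f ∉ s, (1 - p f)`.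
By the Weierstrass product inequality this tail product lies between `1 - ∑' f ∉ s, p f`
and `1`, so it tends to `1` as `s` grows, while `P D ≤ ∏ f ∈ D, p f` makes `P` summable.
-/

open Filter Topology Finset

section

variable {ι : Type*}

theorem Finset.one_sub_sum_le_prod_one_sub {x : ι → ℝ} (h0 : ∀ i, 0 ≤ x i) (h1 : ∀ i, x i ≤ 1)
    (s : Finset ι) : 1 - ∑ i ∈ s, x i ≤ ∏ i ∈ s, (1 - x i) := by
  classical
  induction s using Finset.induction_on with
  | empty => simp
  | insert a s ha ih =>
    rw [sum_insert ha, prod_insert ha]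
    have hs : 0 ≤ ∑ i ∈ s, x i := sum_nonneg fun i _ => h0 i
    nlinarith [mul_le_mul_of_nonneg_left ih (sub_nonneg.2 (h1 a)), mul_nonneg (h0 a) hs]

theorem multipliable_one_sub_of_summable {x : ι → ℝ} (hx : Summable x) :
    Multipliable fun i => 1 - x i := by
  simpa only [sub_eq_add_neg] using Real.multipliable_one_add_of_summable hx.neg

theorem one_sub_tsum_le_tprod_one_sub {x : ι → ℝ} (h0 : ∀ i, 0 ≤ x i) (h1 : ∀ i, x i ≤ 1)
    (hx : Summable x) : 1 - ∑' i, x i ≤ ∏' i, (1 - x i) :=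
  ge_of_tendsto' (multipliable_one_sub_of_summable hx).hasProd fun s =>
    (sub_le_sub_left (hx.sum_le_tsum s fun i _ => h0 i) 1).trans
      (s.one_sub_sum_le_prod_one_sub h0 h1)

theorem tprod_one_sub_le_one {x : ι → ℝ} (h0 : ∀ i, 0 ≤ x i) (h1 : ∀ i, x i ≤ 1)
    (hx : Summable x) : ∏' i, (1 - x i) ≤ 1 :=
  le_of_tendsto' (multipliable_one_sub_of_summable hx).hasProd fun _ =>
    prod_le_one (fun i _ => sub_nonneg.2 (h1 i)) fun i _ => sub_le_self 1 (h0 i)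

theorem tendsto_tprod_compl_one_sub_atTop_one {x : ι → ℝ} (h0 : ∀ i, 0 ≤ x i)
    (h1 : ∀ i, x i ≤ 1) (hx : Summable x) :
    Tendsto (fun s : Finset ι => ∏' i : {i // i ∉ s}, (1 - x i)) atTop (𝓝 1) := by
  have hlower : Tendsto (fun s : Finset ι => 1 - ∑' i : {i // i ∉ s}, x i) atTop (𝓝 1) := by
    simpa using (tendsto_tsum_compl_atTop_zero x).const_sub 1
  refine tendsto_of_tendsto_of_tendsto_of_le_of_le hlower tendsto_const_nhds (fun s => ?_)
    fun s => ?_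
  · exact one_sub_tsum_le_tprod_one_sub (fun i => h0 i) (fun i => h1 i) (hx.subtype _)
  · exact tprod_one_sub_le_one (fun i => h0 i) (fun i => h1 i) (hx.subtype _)

theorem tprod_compl_eq_prod_sdiff_mul_tprod_compl [DecidableEq ι] {M : Type*} [CommMonoid M]
    [TopologicalSpace M] [ContinuousMul M] [T2Space M] {f : ι → M} {D s : Finset ι} (hDs : D ⊆ s)
    (hf : Multipliable fun i : {i // i ∉ s} => f i) :
    ∏' i : {i // i ∉ D}, f i = (∏ i ∈ s \ D, f i) * ∏' i : {i // i ∉ s}, f i := by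
  set g := Set.mulIndicator ((D : Set ι)ᶜ) f
  have hfin : HasProd (g ∘ (↑) : ↥(s : Set ι) → M) (∏ i ∈ s \ D, f i) := by
    convert s.hasProd g using 1
    rw [prod_mulIndicator_eq_prod_filter, sdiff_eq_filter]
    rfl
  have htail : HasProd (g ∘ (↑) : ↥(s : Set ι)ᶜ → M) (∏' i : {i // i ∉ s}, f i) := by
    change HasProd (fun i : {i // i ∉ s} => g i) _
    convert hf.hasProd using 2 with i
    exact Set.mulIndicator_of_mem (s := (D : Set ι)ᶜ) (fun hi => i.2 (hDs hi)) f
  exact (hasProd_subtype_iff_mulIndicator.2 (hfin.mul_compl htail)).tprod_eq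

theorem Summable.hasSum_of_tendsto_sum_powerset {M : Type*} [AddCommMonoid M]
    [TopologicalSpace M] [T2Space M] {f : Finset ι → M} (hf : Summable f) {a : M}
    (h : Tendsto (fun s : Finset ι => ∑ D ∈ s.powerset, f D) atTop (𝓝 a)) : HasSum f a :=
  tendsto_nhds_unique (hf.hasSum.comp tendsto_finset_powerset_atTop_atTop) h ▸ hf.hasSum

section tupleIndepProb

noncomputable def tupleIndepProb (p : ι → ℝ) (D : Finset ι) : ℝ :=
  (∏ f ∈ D, p f) * ∏' f : {f : ι // f ∉ D}, (1 - p f.1)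

variable {p : ι → ℝ}

theorem tupleIndepProb_nonneg (h0 : ∀ i, 0 ≤ p i) (h1 : ∀ i, p i ≤ 1) (D : Finset ι) :
    0 ≤ tupleIndepProb p D :=
  mul_nonneg (prod_nonneg fun i _ => h0 i) (tprod_nonneg fun i => sub_nonneg.2 (h1 i))

theorem tupleIndepProb_le_prod (h0 : ∀ i, 0 ≤ p i) (h1 : ∀ i, p i ≤ 1) (hp : Summable p)
    (D : Finset ι) : tupleIndepProb p D ≤ ∏ i ∈ D, p i :=
  mul_le_of_le_one_right (prod_nonneg fun i _ => h0 i)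
    (tprod_one_sub_le_one (fun i => h0 i) (fun i => h1 i) (hp.subtype _))

theorem summable_tupleIndepProb (h0 : ∀ i, 0 ≤ p i) (h1 : ∀ i, p i ≤ 1) (hp : Summable p) :
    Summable (tupleIndepProb p) :=
  (summable_finsetProd_of_summable_nonneg h0 hp).of_nonneg_of_le
    (tupleIndepProb_nonneg h0 h1) (tupleIndepProb_le_prod h0 h1 hp)

theorem sum_powerset_tupleIndepProb (hp : Summable p) (s : Finset ι) :
    ∑ D ∈ s.powerset, tupleIndepProb p D = ∏' i : {i // i ∉ s}, (1 - p i) := by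
  classical
  have hmult : Multipliable fun i : {i // i ∉ s} => 1 - p i :=
    multipliable_one_sub_of_summable (hp.subtype _)
  calc ∑ D ∈ s.powerset, tupleIndepProb p D
      = ∑ D ∈ s.powerset, (∏ i ∈ D, p i) * (∏ i ∈ s \ D, (1 - p i)) *
          ∏' i : {i // i ∉ s}, (1 - p i) :=
        sum_congr rfl fun D hD => by
          rw [tupleIndepProb, mul_assoc,
            tprod_compl_eq_prod_sdiff_mul_tprod_compl (f := fun i => 1 - p i)
              (mem_powerset.1 hD) hmult]
    _ = (∏ i ∈ s, (p i + (1 - p i))) * ∏' i : {i // i ∉ s}, (1 - p i) := by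
        rw [← sum_mul, prod_add]
    _ = ∏' i : {i // i ∉ s}, (1 - p i) := by simp

end tupleIndepProb

end

theorem stmt_7_general {α : Type*} (p : α → ℝ)
    (hp : ∀ f, 0 ≤ p f ∧ p f ≤ 1) (hsum : Summable p) :
    HasSum
      (fun D : Finset α =>
        (∏ f ∈ D, p f) * ∏' f : {f : α // f ∉ D}, (1 - p f.1)) 1 := by
  have h0 : ∀ f, 0 ≤ p f := fun f => (hp f).1
  have h1 : ∀ f, p f ≤ 1 := fun f => (hp f).2
  refine Summable.hasSum_of_tendsto_sum_powerset (summable_tupleIndepProb h0 h1 hsum) ?_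
  simp_rw [sum_powerset_tupleIndepProb hsum]
  exact tendsto_tprod_compl_one_sub_atTop_one h0 h1 hsum

theorem stmt_7 {α : Type*} [Countable α] (p : α → ℝ)
    (hp : ∀ f, 0 ≤ p f ∧ p f ≤ 1) (hsum : Summable p) :
    HasSum
      (fun D : Finset α =>
        (∏ f ∈ D, p f) * ∏' f : {f : α // f ∉ D}, (1 - p f.1)) 1 :=
  stmt_7_general p hp hsum
end

section
/- Given a countable fact set F and a family (p_f)_{f∈F} of reals in [0,1], there exists a probability measure P on the set of finite subsets of F making the events E_f = {D : f ∈ D} independent with P(E_f) = p_f, if and only if ∑_{f∈F} p_f < ∞. -/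
/-!
If the membership events `{D | f ∈ D}` are independent with probabilities `p f` and
`∑ p f = ∞`, the second Borel–Cantelli lemma says that almost every `D` contains infinitely
many `f`, which no finite set does. Conversely, if `∑ p f < ∞`, toss independent
Bernoulli(`p f`) coins, i.e. take the product measure on `α → Bool`. By the first
Borel–Cantelli lemma almost every outcome has only finitely many `true` coordinates, so this
measure lives on indicators of finite sets and pulls back to `Finset α`; there the cylinder
`{ω | ∀ f ∈ G, ω f = true}`, of mass `∏ f ∈ G, p f`, becomes `{D | ∀ f ∈ G, f ∈ D}`.
-/

open MeasureTheory ProbabilityTheory Filter Set unitInterval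
open scoped ENNReal NNReal

theorem ProbabilityTheory.iIndepSet.tsum_measure_ne_top_of_ae_finite
    {Ω ι : Type*} [MeasurableSpace Ω] [Countable ι] {μ : Measure Ω} {s : ι → Set Ω}
    (hsm : ∀ i, MeasurableSet (s i)) (hs : iIndepSet s μ)
    (hfin : ∀ᵐ ω ∂μ, {i | ω ∈ s i}.Finite) :
    ∑' i, μ (s i) ≠ ∞ := by
  have := hs.isProbabilityMeasure
  rcases finite_or_infinite ι with _ | _
  · have := Fintype.ofFinite ι
    rw [tsum_fintype]
    exact ENNReal.sum_ne_top.2 fun i _ => measure_ne_top μ (s i)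
  · obtain ⟨e⟩ : Nonempty (ℕ ≃ ι) :=
      (nonempty_denumerable ι).map fun _ : Denumerable ι => (Denumerable.eqv ι).symm
    intro htop
    have hlimsup_one := measure_limsup_eq_one (fun n => hsm (e n)) (hs.precomp e.injective)
      (by rwa [e.tsum_eq fun i => μ (s i)])
    have hlimsup_zero : μ (limsup (fun n => s (e n)) atTop) = 0 := by
      rw [ae_iff] at hfin
      refine measure_mono_null (fun ω hω => ?_) hfin
      intro hω_fin
      rw [← Nat.cofinite_eq_atTop, mem_limsup_iff_frequently_mem,
        frequently_cofinite_iff_infinite] at hω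
      exact hω (hω_fin.preimage e.injective.injOn)
    rw [hlimsup_zero] at hlimsup_one
    exact zero_ne_one hlimsup_one

section BoolIndicator

variable {α : Type*}

noncomputable def finsetBoolIndicator (D : Finset α) : α → Bool := (D : Set α).boolIndicator

theorem finsetBoolIndicator_eq_true {D : Finset α} {f : α} :
    finsetBoolIndicator D f = true ↔ f ∈ D :=
  ((D : Set α).mem_iff_boolIndicator f).symm

theorem finsetBoolIndicator_injective : Function.Injective (finsetBoolIndicator (α := α)) := by
  intro D D' h
  ext f
  rw [← finsetBoolIndicator_eq_true, h, finsetBoolIndicator_eq_true]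

theorem range_finsetBoolIndicator :
    range (finsetBoolIndicator (α := α)) = {ω | {f | ω f = true}.Finite} := by
  ext ω
  constructor
  · rintro ⟨D, rfl⟩
    show {f | _}.Finite
    simp only [finsetBoolIndicator_eq_true]
    exact D.finite_toSet
  · intro h
    refine ⟨h.toFinset, funext fun f => ?_⟩
    rw [Bool.eq_iff_iff, finsetBoolIndicator_eq_true, Finite.mem_toFinset, mem_ofPred_eq]

theorem image_finsetBoolIndicator_setOf_forall_mem (G : Finset α) :
    finsetBoolIndicator '' {D | ∀ f ∈ G, f ∈ D} =
      (G : Set α).pi (fun _ => {true}) ∩ range finsetBoolIndicator := by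
  ext ω
  constructor
  · rintro ⟨D, hD, rfl⟩
    exact ⟨fun f hf => finsetBoolIndicator_eq_true.2 (hD f hf), D, rfl⟩
  · rintro ⟨hG, D, rfl⟩
    exact ⟨D, fun f hf => finsetBoolIndicator_eq_true.1 (hG f hf), rfl⟩

end BoolIndicator

section Construction

variable {α : Type*}

noncomputable def bernoulliProduct (p : α → I) : Measure (α → Bool) :=
  Measure.infinitePi fun f => bernoulliMeasure true false (p f)

theorem bernoulliProduct_pi_true (p : α → I) (G : Finset α) :
    bernoulliProduct p ((G : Set α).pi fun _ => {true}) =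
      ∏ f ∈ G, (toNNReal (p f) : ℝ≥0∞) := by
  rw [bernoulliProduct, Measure.infinitePi_pi _ fun _ _ => measurableSet_singleton true]
  simp

variable [Countable α] {p : α → I}

theorem ae_finite_bernoulliProduct (hp : ∑' f, (toNNReal (p f) : ℝ≥0∞) ≠ ∞) :
    ∀ᵐ ω ∂bernoulliProduct p, {f | ω f = true}.Finite := by
  have hcoord (f : α) :
      {ω : α → Bool | ω f = true} = (({f} : Finset α) : Set α).pi fun _ => {true} := by
    ext ω
    simp
  refine ae_finite_setOfPred_mem (s := fun f => {ω : α → Bool | ω f = true}) ?_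
  simpa only [hcoord, bernoulliProduct_pi_true, Finset.prod_singleton] using hp

variable [MeasurableSpace (Finset α)] [MeasurableSingletonClass (Finset α)]

noncomputable def randomFinset (p : α → I) : Measure (Finset α) :=
  (bernoulliProduct p).comap finsetBoolIndicator

theorem randomFinset_setOf_forall_mem (hp : ∑' f, (toNNReal (p f) : ℝ≥0∞) ≠ ∞)
    (G : Finset α) :
    randomFinset p {D | ∀ f ∈ G, f ∈ D} = ∏ f ∈ G, (toNNReal (p f) : ℝ≥0∞) := by
  rw [randomFinset, Measure.comap_apply _ finsetBoolIndicator_injective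
      (fun s _ => (s.to_countable.image _).measurableSet) _ (to_countable _).measurableSet,
    image_finsetBoolIndicator_setOf_forall_mem, measure_inter_conull, bernoulliProduct_pi_true]
  rw [range_finsetBoolIndicator]
  exact ae_finite_bernoulliProduct hp

theorem isProbabilityMeasure_randomFinset (hp : ∑' f, (toNNReal (p f) : ℝ≥0∞) ≠ ∞) :
    IsProbabilityMeasure (randomFinset p) :=
  ⟨by simpa using randomFinset_setOf_forall_mem hp ∅⟩

end Construction

section MembershipEvents

variable {α : Type*} [MeasurableSpace (Finset α)] {μ : Measure (Finset α)} {r : α → ℝ≥0∞}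

theorem measure_setOf_mem_of_forall
    (h : ∀ G : Finset α, μ {D | ∀ f ∈ G, f ∈ D} = ∏ f ∈ G, r f) (f : α) : μ {D | f ∈ D} = r f := by
  simpa using h {f}

variable [Countable α] [MeasurableSingletonClass (Finset α)]

theorem iIndepSet_setOf_mem
    (h : ∀ G : Finset α, μ {D | ∀ f ∈ G, f ∈ D} = ∏ f ∈ G, r f) :
    iIndepSet (fun f => {D : Finset α | f ∈ D}) μ := by
  rw [iIndepSet_iff_meas_biInter fun f => (to_countable _).measurableSet]
  intro G
  simp_rw [measure_setOf_mem_of_forall h, ← h G]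
  congr 1
  ext D
  simp

theorem tsum_ne_top_of_measure_setOf_forall_mem
    (h : ∀ G : Finset α, μ {D | ∀ f ∈ G, f ∈ D} = ∏ f ∈ G, r f) : ∑' f, r f ≠ ∞ := by
  simpa only [measure_setOf_mem_of_forall h] using
    (iIndepSet_setOf_mem h).tsum_measure_ne_top_of_ae_finite
      (fun f => (to_countable _).measurableSet) (ae_of_all _ fun D => D.finite_toSet)

end MembershipEvents

theorem stmt_10 {α : Type*} [Countable α] [MeasurableSpace (Finset α)]
    [MeasurableSingletonClass (Finset α)]
    (p : α → ℝ) (hp : ∀ f, 0 ≤ p f ∧ p f ≤ 1) :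
    (∃ μ : Measure (Finset α), IsProbabilityMeasure μ ∧
      ∀ G : Finset α,
        μ {D : Finset α | ∀ f ∈ G, f ∈ D} = ∏ f ∈ G, ENNReal.ofReal (p f))
    ↔ Summable p := by
  set q : α → I := fun f => ⟨p f, hp f⟩
  have hq : ∀ f, ENNReal.ofReal (p f) = toNNReal (q f) := fun f =>
    ENNReal.ofReal_coe_nnreal (p := toNNReal (q f))
  have hsum : Summable p ↔ ∑' f, (toNNReal (q f) : ℝ≥0∞) ≠ ∞ := by
    rw [ENNReal.tsum_coe_ne_top_iff_summable, ← NNReal.summable_coe]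
    rfl
  simp_rw [hq, hsum]
  constructor
  · rintro ⟨μ, -, hμ⟩
    exact tsum_ne_top_of_measure_setOf_forall_mem hμ
  · intro h
    exact ⟨randomFinset q, isProbabilityMeasure_randomFinset h,
      randomFinset_setOf_forall_mem h⟩
end

section
/- Let (Ω, 𝔄, P) be a probability space of finite subsets of a (possibly uncountable) fact set F, with all events E_f = {D : f ∈ D} measurable. Then the set of facts f with P(E_f) > 0 is countable. -/
/-!
Every finite set `D` lies in only finitely many of the events `E_f = {D | f ∈ D}`. Hence, if
infinitely many `E_f` had probability at least `ε > 0`, the tails `⋃_{m ≥ n} E_{f_m}` along an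
enumeration of them would decrease to `∅` while keeping measure at least `ε`, contradicting
continuity from above. So each level set `{f | ε ≤ P(E_f)}` is finite, and `{f | 0 < P(E_f)}` is
a countable union of them.
-/

open MeasureTheory Filter Set

namespace MeasureTheory

variable {Ω ι : Type*} [MeasurableSpace Ω] {μ : Measure Ω} [IsFiniteMeasure μ] {s : ι → Set Ω}

theorem finite_setOf_le_measure_of_finite_setOf_mem (hs : ∀ i, NullMeasurableSet (s i) μ)
    (hfin : ∀ x, {i | x ∈ s i}.Finite) {ε : ENNReal} (hε : ε ≠ 0) :
    {i | ε ≤ μ (s i)}.Finite := by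
  by_contra hinf
  let u := (Set.not_finite.mp hinf).natEmbedding
  set tail : ℕ → Set Ω := fun n ↦ ⋃ m ≥ n, s (u m)
  have tail_anti : Antitone tail := fun _ _ hmn ↦
    biUnion_subset_biUnion_left fun _ hk ↦ hmn.trans hk
  have tail_meas : ∀ n, NullMeasurableSet (tail n) μ := fun n ↦
    .biUnion (to_countable _) fun _ _ ↦ hs _
  have iInter_tail : ⋂ n, tail n = ∅ := by
    refine eq_empty_iff_forall_notMem.mpr fun x hx ↦ ?_
    have hfreq : ∃ᶠ m in atTop, x ∈ s (u m) := by
      simpa [tail, frequently_atTop] using hx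
    have hpre : (Subtype.val ∘ u ⁻¹' {i | x ∈ s i}).Finite :=
      (hfin x).preimage (Subtype.val_injective.comp u.injective).injOn
    exact Nat.frequently_atTop_iff_infinite.mp hfreq hpre
  have tendsto_zero : Tendsto (μ ∘ tail) atTop (nhds 0) := by
    simpa [iInter_tail] using
      tendsto_measure_iInter_atTop tail_meas tail_anti ⟨0, measure_ne_top μ _⟩
  have le_tail : ∀ n, ε ≤ μ (tail n) := fun n ↦
    (u n).2.trans (measure_mono fun _ hx ↦ mem_iUnion₂.mpr ⟨n, le_rfl, hx⟩)
  exact hε (nonpos_iff_eq_zero.mp (ge_of_tendsto' tendsto_zero le_tail))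

theorem countable_setOf_measure_pos_of_finite_setOf_mem (hs : ∀ i, NullMeasurableSet (s i) μ)
    (hfin : ∀ x, {i | x ∈ s i}.Finite) :
    {i | 0 < μ (s i)}.Countable := by
  have hsub : {i | 0 < μ (s i)} ⊆ ⋃ n : ℕ, {i | (n : ENNReal)⁻¹ ≤ μ (s i)} := fun i hi ↦
    let ⟨n, hn⟩ := ENNReal.exists_inv_nat_lt hi.ne'
    mem_iUnion.mpr ⟨n, hn.le⟩
  refine (countable_iUnion fun n ↦ ?_).mono hsub
  exact (finite_setOf_le_measure_of_finite_setOf_mem hs hfin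
    (ENNReal.inv_ne_zero.mpr (ENNReal.natCast_ne_top n))).countable

end MeasureTheory

theorem stmt_12 {α : Type*} [MeasurableSpace (Finset α)]
    (μ : Measure (Finset α)) [IsProbabilityMeasure μ]
    (hmeas : ∀ f : α, MeasurableSet {D : Finset α | f ∈ D}) :
    Set.Countable {f : α | 0 < μ {D : Finset α | f ∈ D}} :=
  countable_setOf_measure_pos_of_finite_setOf_mem (fun f ↦ (hmeas f).nullMeasurableSet)
    fun D ↦ D.finite_toSet
end

section
/- Let F be a countable set partitioned into blocks (B_j)_{j∈J} and, for each j, a family (p_f)_{f∈B_j} of reals in [0,1] with ∑_{f∈B_j} p_f ≤ 1. If moreover ∑_{f∈F} p_f < ∞, then there exists a probability measure P on finite subsets of F such that: (1) with probability 1 the random set contains at most one fact from each block; (2) P({D : f ∈ D}) = p_f for all f; and (3) for facts f_1,…,f_k from pairwise distinct blocks, P(⋂_i {D : f_i ∈ D}) = ∏_i p_{f_i}. -/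
/-!
Realise the database as independent block choices: each block `j` independently picks a fact
`f` of the block with probability `p f`, or nothing with probability `1 - ∑_{f ∈ B_j} p f`; the
product of these countably supported laws is `Measure.infinitePi`. The random database is the set
of picked facts. It meets every block at most once by construction, and it is almost surely
finite by Borel–Cantelli since `∑ p f < ∞`. For facts `f₁, …, f_k` in distinct blocks the event
"all `fᵢ` are picked" is a cylinder over the blocks `b fᵢ`, whose product measure is `∏ p fᵢ`.
-/

open MeasureTheory
open scoped ENNReal

section FinsetOfFinite

variable {Ω α : Type*}

open scoped Classical in
/-- Junk value `∅` on infinite sets. -/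
noncomputable def Set.finsetOfFinite (s : Set α) : Finset α :=
  if h : s.Finite then h.toFinset else ∅

lemma Set.Finite.coe_finsetOfFinite {s : Set α} (h : s.Finite) :
    (s.finsetOfFinite : Set α) = s := by
  simp [Set.finsetOfFinite, h]

lemma Set.finsetOfFinite_of_infinite {s : Set α} (h : s.Infinite) : s.finsetOfFinite = ∅ := by
  simp [Set.finsetOfFinite, h]

lemma Set.mem_of_mem_finsetOfFinite {s : Set α} {a : α} (h : a ∈ s.finsetOfFinite) : a ∈ s := by
  by_cases hs : s.Finite
  · rwa [← hs.coe_finsetOfFinite]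
  · simp [Set.finsetOfFinite_of_infinite hs] at h

variable [MeasurableSpace Ω] [Countable α] [MeasurableSpace (Finset α)]

lemma measurable_finsetOfFinite {S : Ω → Set α} (hS : ∀ a, Measurable fun ω => a ∈ S ω) :
    Measurable fun ω => (S ω).finsetOfFinite := by
  have hEq (D : Finset α) : Measurable fun ω => S ω = D := by
    simp only [Set.ext_iff, Finset.mem_coe]
    exact Measurable.forall fun a => (hS a).iff measurable_const
  have hFin : Measurable fun ω => (S ω).Finite := by
    have : (fun ω => (S ω).Finite) = fun ω => ∃ D : Finset α, S ω = D := funext fun ω =>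
      propext ⟨fun h => h.exists_finset_coe.imp fun _ => Eq.symm,
        fun ⟨D, hD⟩ => hD ▸ D.finite_toSet⟩
    exact this ▸ Measurable.exists hEq
  refine measurable_to_countable' fun D => ?_
  have : (fun ω => (S ω).finsetOfFinite) ⁻¹' {D} =
      {ω | S ω = D} ∪ {ω | ¬ (S ω).Finite ∧ D = ∅} := by
    ext ω
    by_cases h : (S ω).Finite
    · rw [Set.mem_preimage, Set.mem_singleton_iff, ← Finset.coe_inj, h.coe_finsetOfFinite]
      simp [h]
    · have hD : S ω ≠ D := fun hD => h (hD ▸ D.finite_toSet)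
      simpa [Set.finsetOfFinite_of_infinite h, hD, eq_comm] using fun _ => h
  rw [this]
  exact (hEq D).setOf.union (hFin.not.and measurable_const).setOf

end FinsetOfFinite

/-- A block's choice is `none` (no fact of the block) or `some f`. -/
abbrev Option.measurableSpaceTop (α : Type*) : MeasurableSpace (Option α) := ⊤

namespace BlockIndependentDisjoint

variable {α β : Type*} (b : α → β) (P : α → ℝ≥0∞)

noncomputable def blockMass (j : β) : ℝ≥0∞ := ∑' f : {f // b f = j}, P f

noncomputable def blockWeight (j : β) : Option α → ℝ≥0∞
  | none => 1 - blockMass b P j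
  | some f => {f | b f = j}.indicator P f

lemma hasSum_blockWeight {j : β} (hj : blockMass b P j ≤ 1) :
    HasSum (blockWeight b P j) 1 := by
  refine ENNReal.summable.hasSum_iff.2 ?_
  rw [ENNReal.tsum_eq_add_tsum_ite none, ← Option.some_injective _ |>.tsum_eq]
  · simp only [reduceCtorEq, if_false, blockWeight]
    rw [← tsum_subtype]
    exact tsub_add_cancel_of_le hj
  · rintro (_ | f) h
    · simp at h
    · exact ⟨f, rfl⟩

variable {b P} (hP : ∀ j, blockMass b P j ≤ 1)

noncomputable def blockPMF (j : β) : PMF (Option α) :=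
  ⟨blockWeight b P j, hasSum_blockWeight b P (hP j)⟩

attribute [local instance] Option.measurableSpaceTop

noncomputable def choiceMeasure : Measure (β → Option α) :=
  Measure.infinitePi fun j => (blockPMF hP j).toMeasure

instance : IsProbabilityMeasure (choiceMeasure hP) := by
  unfold choiceMeasure
  infer_instance

variable (b) in
def chosen (ω : β → Option α) : Set α := {f | ω (b f) = some f}

lemma choiceMeasure_forall_chosen {G : Finset α} (hG : Set.InjOn b G) :
    choiceMeasure hP {ω | ∀ f ∈ G, f ∈ chosen b ω} = ∏ f ∈ G, P f := by
  classical
  set t : β → Set (Option α) := fun j => {o | ∀ f ∈ G, b f = j → o = some f}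
  have hpi : {ω | ∀ f ∈ G, f ∈ chosen b ω} = Set.pi ↑(G.image b) t := by
    ext ω
    simp only [chosen, t, Set.mem_ofPred_eq, Set.mem_pi, Finset.coe_image, Set.forall_mem_image,
      Finset.mem_coe]
    constructor
    · intro h a _ f hf hfa
      exact hfa ▸ h f hf
    · intro h f hf
      exact h hf f hf rfl
  have ht : ∀ f ∈ G, t (b f) = {some f} := fun f hf => by
    ext o
    exact ⟨fun h => h f hf rfl, fun h g hg hgf => h ▸ congrArg some (hG hf hg hgf.symm)⟩
  rw [hpi, choiceMeasure, Measure.infinitePi_pi _ fun _ _ => MeasurableSet.of_discrete,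
    Finset.prod_image hG]
  refine Finset.prod_congr rfl fun f hf => ?_
  rw [ht f hf, PMF.toMeasure_apply_singleton _ _ MeasurableSet.of_discrete]
  show blockWeight b P (b f) (some f) = P f
  simp [blockWeight]

lemma measurable_mem_chosen (f : α) : Measurable fun ω : β → Option α => f ∈ chosen b ω := by
  have h : MeasurableSet ((fun ω : β → Option α => ω (b f)) ⁻¹' {some f}) :=
    measurable_pi_apply (b f) (measurableSet_singleton _)
  exact measurableSet_setOfPred.1 h

lemma ae_chosen_finite [Countable α] (hsum : ∑' f, P f ≠ ∞) :
    ∀ᵐ ω ∂choiceMeasure hP, (chosen b ω).Finite := by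
  have hsingle (f : α) : choiceMeasure hP {ω | f ∈ chosen b ω} = P f := by
    simpa using choiceMeasure_forall_chosen hP (G := {f}) (by simp)
  refine ae_finite_setOfPred_mem (s := fun f => {ω | f ∈ chosen b ω}) ?_
  simpa [hsingle] using hsum

variable [Countable α] [MeasurableSpace (Finset α)]

noncomputable def measure : Measure (Finset α) :=
  (choiceMeasure hP).map fun ω => (chosen b ω).finsetOfFinite

lemma measurable_finsetOfFinite_chosen :
    Measurable fun ω : β → Option α => (chosen b ω).finsetOfFinite :=
  measurable_finsetOfFinite measurable_mem_chosen

instance : IsProbabilityMeasure (measure hP) :=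
  Measure.isProbabilityMeasure_map measurable_finsetOfFinite_chosen.aemeasurable

variable [MeasurableSingletonClass (Finset α)]

lemma measure_injOn : measure hP {D | ∀ f ∈ D, ∀ g ∈ D, b f = b g → f = g} = 1 := by
  have hpreimage : (fun ω => (chosen b ω).finsetOfFinite) ⁻¹'
      {D | ∀ f ∈ D, ∀ g ∈ D, b f = b g → f = g} = Set.univ := by
    refine Set.eq_univ_of_forall fun ω f hf g hg hfg => Option.some_injective _ ?_
    rw [← Set.mem_of_mem_finsetOfFinite hf, ← Set.mem_of_mem_finsetOfFinite hg, hfg]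
  rw [measure, Measure.map_apply measurable_finsetOfFinite_chosen MeasurableSet.of_discrete,
    hpreimage, measure_univ]

lemma measure_forall_mem (hsum : ∑' f, P f ≠ ∞) {G : Finset α} (hG : Set.InjOn b G) :
    measure hP {D | ∀ f ∈ G, f ∈ D} = ∏ f ∈ G, P f := by
  rw [measure, Measure.map_apply measurable_finsetOfFinite_chosen MeasurableSet.of_discrete,
    ← choiceMeasure_forall_chosen hP hG]
  refine measure_congr (Filter.eventuallyEq_set.2 ?_)
  filter_upwards [ae_chosen_finite hP hsum] with ω hω
  simp only [Set.mem_preimage, Set.mem_ofPred_eq, ← Finset.mem_coe, hω.coe_finsetOfFinite]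

end BlockIndependentDisjoint

theorem stmt_16 {α β : Type*} [Countable α] [MeasurableSpace (Finset α)]
    [MeasurableSingletonClass (Finset α)]
    (b : α → β) (p : α → ℝ) (hp : ∀ f, 0 ≤ p f ∧ p f ≤ 1)
    (hblock : ∀ j : β, ∑' f : {f : α // b f = j}, p f.1 ≤ 1)
    (hsum : Summable p) :
    ∃ μ : Measure (Finset α), IsProbabilityMeasure μ ∧
      μ {D : Finset α | ∀ f ∈ D, ∀ g ∈ D, b f = b g → f = g} = 1 ∧
      (∀ f : α, μ {D : Finset α | f ∈ D} = ENNReal.ofReal (p f)) ∧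
      ∀ G : Finset α, Set.InjOn b ↑G →
        μ {D : Finset α | ∀ f ∈ G, f ∈ D} = ∏ f ∈ G, ENNReal.ofReal (p f) := by
  open BlockIndependentDisjoint in
  have hmass : ∀ j, blockMass b (fun f => ENNReal.ofReal (p f)) j ≤ 1 := fun j => by
    rw [blockMass, ← ENNReal.ofReal_tsum_of_nonneg (f := fun f : {f // b f = j} => p f)
      (fun f => (hp f).1) (hsum.subtype _)]
    exact ENNReal.ofReal_le_one.2 (hblock j)
  have hfin : ∑' f, ENNReal.ofReal (p f) ≠ ∞ := by
    rw [← ENNReal.ofReal_tsum_of_nonneg (fun f => (hp f).1) hsum]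
    exact ENNReal.ofReal_ne_top
  refine ⟨measure hmass, inferInstance, measure_injOn hmass, fun f => ?_,
    fun G hG => measure_forall_mem hmass hfin hG⟩
  simpa using measure_forall_mem hmass hfin (G := {f}) (by simp)
end
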